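/- arXiv:2110.10315 — 4 statements merged into one kernel-verified Lean document; each statement's English description precedes it below -/
import Mathlib

section
/- Let \alpha_1, \ldots, \alpha_m be the complex zeroes of E_m(x) (with multiplicity). Then \sum_{i=1}^m \alpha_i^{-1} = -1, \sum_{i=1}^m \alpha_i^{-t} = 0 for 2 \le t \le m, \sum_{i=1}^m \alpha_i^{-(m+1)} = 1/m!, and \sum_{i=1}^m \alpha_i^{-(m+2)} = -1/m!. -/
open Polynomial

noncomputable def Epoly (m : ℕ) : Polynomial ℂ :=
  ∑ k ∈ Finset.range (m + 1), C ((k.factorial : ℂ))⁻¹ * X ^ k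

/-!
For a split polynomial `p` with `p(0) ≠ 0`, the logarithmic derivative expands as
`p'/p = ∑ᵢ 1/(x - αᵢ) = -∑ₙ (∑ᵢ αᵢ^{-(n+1)}) xⁿ` in `K⟦X⟧`, so the reciprocal power sums are
the coefficients of `-p'/p`. For `p = E_m` we have `E_m' = E_m - xᵐ/m!`, hence
`E_m'/E_m = 1 - (xᵐ/m!) E_m⁻¹` with `E_m⁻¹ = 1 - x + O(x²)`, and reading off the coefficients of
`x⁰, …, x^{m+1}` gives the four identities.
-/

open scoped Nat PowerSeries

namespace PowerSeries

variable {K : Type*} [Field K]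

theorem coeff_inv_X_sub_C {a : K} (ha : a ≠ 0) (n : ℕ) :
    coeff n (X - C a)⁻¹ = -a⁻¹ ^ (n + 1) := by
  have h : (X - C a)⁻¹ = -invUnitsSub (Units.mk0 a ha) := by
    rw [PowerSeries.inv_eq_iff_mul_eq_one (by simpa using ha), neg_mul, ← mul_neg, neg_sub]
    exact invUnitsSub_mul_sub (Units.mk0 a ha)
  rw [h, map_neg, coeff_invUnitsSub, one_divp, Units.val_inv_eq_inv_val, Units.val_pow_eq_pow_val,
    Units.val_mk0, inv_pow]

end PowerSeries

namespace Polynomial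

variable {K : Type*} [Field K]

theorem coe_derivative_prod_X_sub_C {s : Multiset K} (hs : 0 ∉ s) :
    ((derivative (s.map (X - C ·)).prod : K[X]) : K⟦X⟧) =
      ((s.map (X - C ·)).prod : K[X]) *
        (s.map fun a => (PowerSeries.X - PowerSeries.C a)⁻¹).sum := by
  induction s using Multiset.induction_on with
  | empty => simp
  | cons a s ih =>
    have ha : a ≠ 0 := fun h => hs (h ▸ Multiset.mem_cons_self a s)
    have hinv : (PowerSeries.X - PowerSeries.C a : K⟦X⟧) * (PowerSeries.X - PowerSeries.C a)⁻¹ = 1 :=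
      PowerSeries.mul_inv_cancel _ (by simpa [eq_comm] using ha)
    simp only [Multiset.map_cons, Multiset.prod_cons, Multiset.sum_cons, derivative_mul,
      derivative_sub, derivative_X, derivative_C, sub_zero, one_mul]
    rw [coe_add, coe_mul, coe_mul, ih (fun h => hs (Multiset.mem_cons_of_mem h)), coe_sub, coe_X,
      coe_C]
    linear_combination -(((s.map (X - C ·)).prod : K[X]) : K⟦X⟧) * hinv

theorem sum_roots_inv_pow_eq_neg_coeff {p : K[X]} (hp : p.Splits) (h0 : p.coeff 0 ≠ 0) (n : ℕ) :
    (p.roots.map fun a => a⁻¹ ^ (n + 1)).sum =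
      -PowerSeries.coeff n ((derivative p : K⟦X⟧) * (p : K⟦X⟧)⁻¹) := by
  have hroots : 0 ∉ p.roots := fun h =>
    h0 (by simpa [coeff_zero_eq_eval_zero] using isRoot_of_mem_roots h)
  have hlog : (derivative p : K⟦X⟧) =
      p * (p.roots.map fun a => (PowerSeries.X - PowerSeries.C a)⁻¹).sum := by
    conv_lhs => rw [hp.eq_prod_roots]
    rw [derivative_C_mul, coe_mul, coe_derivative_prod_X_sub_C hroots, ← mul_assoc, ← coe_mul,
      ← hp.eq_prod_roots]
  rw [hlog, mul_right_comm, PowerSeries.mul_inv_cancel _ (by rwa [constantCoeff_coe]), one_mul,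
    map_multiset_sum, Multiset.map_map, ← Multiset.sum_map_neg]
  refine congrArg _ (Multiset.map_congr rfl fun a ha => ?_)
  rw [Function.comp_apply, PowerSeries.coeff_inv_X_sub_C (ne_of_mem_of_not_mem ha hroots),
    neg_neg]

end Polynomial

theorem Epoly_succ (m : ℕ) : Epoly (m + 1) = Epoly m + C (((m + 1)! : ℂ))⁻¹ * X ^ (m + 1) :=
  Finset.sum_range_succ _ _

theorem coeff_Epoly_of_le {m n : ℕ} (h : n ≤ m) : (Epoly m).coeff n = ((n ! : ℂ))⁻¹ := by
  simp [Epoly, coeff_X_pow, Nat.lt_succ_iff.mpr h]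

theorem derivative_Epoly (m : ℕ) : derivative (Epoly m) = Epoly m - C ((m ! : ℂ))⁻¹ * X ^ m := by
  induction m with
  | zero => simp [Epoly]
  | succ m ih =>
    have hfac : ((m + 1)! : ℂ)⁻¹ * ((m + 1 : ℕ) : ℂ) = (m ! : ℂ)⁻¹ := by
      rw [Nat.factorial_succ]; push_cast; field_simp
    rw [Epoly_succ, derivative_add, ih, derivative_C_mul_X_pow, hfac, Nat.add_sub_cancel]
    ring

theorem constantCoeff_Epoly (m : ℕ) : PowerSeries.constantCoeff (Epoly m : ℂ⟦X⟧) = 1 := by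
  simp [coeff_Epoly_of_le (Nat.zero_le m)]

theorem sum_roots_Epoly_inv_pow (m n : ℕ) :
    ((Epoly m).roots.map fun a => a⁻¹ ^ (n + 1)).sum =
      (if m ≤ n then (m ! : ℂ)⁻¹ * PowerSeries.coeff (n - m) (Epoly m : ℂ⟦X⟧)⁻¹ else 0) -
        if n = 0 then 1 else 0 := by
  have hconst : PowerSeries.constantCoeff (Epoly m : ℂ⟦X⟧) ≠ 0 := by
    rw [constantCoeff_Epoly]; exact one_ne_zero
  rw [sum_roots_inv_pow_eq_neg_coeff (IsAlgClosed.splits _) (by rwa [← constantCoeff_coe]),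
    derivative_Epoly, coe_sub, coe_mul, coe_C, coe_pow, coe_X, sub_mul,
    PowerSeries.mul_inv_cancel _ hconst, map_sub, PowerSeries.coeff_one, mul_assoc,
    PowerSeries.coeff_C_mul, PowerSeries.coeff_X_pow_mul']
  split_ifs <;> ring

theorem coeff_zero_inv_Epoly (m : ℕ) : PowerSeries.coeff 0 (Epoly m : ℂ⟦X⟧)⁻¹ = 1 := by
  rw [PowerSeries.coeff_zero_eq_constantCoeff_apply, PowerSeries.constantCoeff_inv,
    constantCoeff_Epoly, inv_one]

theorem coeff_one_inv_Epoly {m : ℕ} (hm : 1 ≤ m) : PowerSeries.coeff 1 (Epoly m : ℂ⟦X⟧)⁻¹ = -1 := by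
  have hconst : PowerSeries.constantCoeff (Epoly m : ℂ⟦X⟧) ≠ 0 := by
    rw [constantCoeff_Epoly]; exact one_ne_zero
  have h := congrArg (PowerSeries.coeff 1) (PowerSeries.inv_mul_cancel _ hconst)
  simp only [PowerSeries.coeff_mul, Finset.Nat.sum_antidiagonal_succ, Finset.Nat.antidiagonal_zero,
    Finset.sum_singleton, zero_add, PowerSeries.coeff_one, one_ne_zero, if_false, coeff_coe,
    coeff_Epoly_of_le hm, coeff_Epoly_of_le (Nat.zero_le m), coeff_zero_inv_Epoly,
    Nat.factorial_zero, Nat.factorial_one, Nat.cast_one, inv_one, mul_one] at h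
  linear_combination h

/-- Power sums of the reciprocals of the zeroes of `E_m`. -/
theorem stmt_5 (m : ℕ) (hm : 1 ≤ m) :
    (((Epoly m).roots.map fun α => α⁻¹ ^ 1).sum = -1) ∧
    (∀ t : ℕ, 2 ≤ t → t ≤ m → ((Epoly m).roots.map fun α => α⁻¹ ^ t).sum = 0) ∧
    (((Epoly m).roots.map fun α => α⁻¹ ^ (m + 1)).sum = (m.factorial : ℂ)⁻¹) ∧
    (((Epoly m).roots.map fun α => α⁻¹ ^ (m + 2)).sum = -(m.factorial : ℂ)⁻¹) := by
  refine ⟨?_, fun t ht2 htm => ?_, ?_, ?_⟩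
  · rw [sum_roots_Epoly_inv_pow m 0, if_neg (by omega), if_pos rfl, zero_sub]
  · obtain ⟨n, rfl⟩ : ∃ n, t = n + 1 := ⟨t - 1, by omega⟩
    rw [sum_roots_Epoly_inv_pow, if_neg (by omega), if_neg (by omega), sub_zero]
  · rw [sum_roots_Epoly_inv_pow, if_pos le_rfl, if_neg (by omega), Nat.sub_self, coeff_zero_inv_Epoly]
    ring
  · rw [sum_roots_Epoly_inv_pow, if_pos (by omega), if_neg (by omega), Nat.add_sub_cancel_left,
      coeff_one_inv_Epoly hm]
    ring
end

section
/- For |x| < (m+2)/2, we have |(m+1)! \sum_{k=1}^{\infty} x^k/(m+1+k)!| < 1, and consequently x^{m+1}/((m+1)! R_m(x)) can be expanded as a convergent geometric series, where R_m(x) = \sum_{k=m+1}^{\infty} x^k/k!. -/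
/-!
Since `n! (n+1)^k ≤ (n+k)!`, the `k`-th term of `n! ∑_k x^k/(n+k)!` is bounded by `r^k` with
`r = |x|/(n+1)`. Applied with `n = m+1` to the terms with `k ≥ 1`, this gives `|S| ≤ r/(1-r)`,
which is `< 1` exactly when `r < 1/2`, i.e. `|x| < (m+2)/2`. Factoring `x^{m+1}` out of the tail
`R_m(x)` gives `(m+1)! R_m(x) = x^{m+1} (1 + S)`, so the quotient is `1/(1+S) = ∑_j (-S)^j`.
-/

open Nat

variable {𝕂 : Type*} [RCLike 𝕂]

lemma norm_factorial_mul_pow_div_factorial_add_le (n k : ℕ) (x : 𝕂) :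
    ‖(n ! : 𝕂) * (x ^ k / ((n + k)! : 𝕂))‖ ≤ (‖x‖ / (n + 1)) ^ k := by
  have hfac : ((n ! * (n + 1) ^ k : ℕ) : ℝ) ≤ (n + k)! := by
    exact_mod_cast factorial_mul_pow_le_factorial
  push_cast at hfac
  rw [norm_mul, norm_div, norm_pow, RCLike.norm_natCast, RCLike.norm_natCast, div_pow,
    mul_div_assoc', div_le_div_iff₀ (by positivity) (by positivity), mul_right_comm,
    mul_comm (‖x‖ ^ k)]
  gcongr

lemma summable_pow_div_factorial_add (n : ℕ) (x : 𝕂) :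
    Summable fun k : ℕ ↦ x ^ k / ((n + k)! : 𝕂) := by
  refine .of_norm_bounded (Real.summable_pow_div_factorial ‖x‖) fun k ↦ ?_
  rw [norm_div, norm_pow, RCLike.norm_natCast]
  gcongr
  omega

lemma norm_factorial_mul_tsum_pow_succ_div_factorial_add_le (n : ℕ) (x : 𝕂)
    (hx : ‖x‖ < n + 1) :
    ‖(n ! : 𝕂) * ∑' k : ℕ, x ^ (k + 1) / ((n + (k + 1))! : 𝕂)‖
      ≤ ‖x‖ / (n + 1) * (1 - ‖x‖ / (n + 1))⁻¹ := by
  set r := ‖x‖ / (n + 1)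
  have hr0 : 0 ≤ r := by positivity
  have hr1 : r < 1 := (div_lt_one (by positivity)).2 hx
  have hgeom : HasSum (fun k : ℕ ↦ r ^ (k + 1)) (r * (1 - r)⁻¹) := by
    simpa only [_root_.pow_succ'] using (hasSum_geometric_of_lt_one hr0 hr1).mul_left r
  rw [← tsum_mul_left]
  exact tsum_of_norm_bounded hgeom fun k ↦ norm_factorial_mul_pow_div_factorial_add_le n (k + 1) x

lemma norm_factorial_mul_tsum_pow_succ_div_factorial_add_lt_one (n : ℕ) (x : 𝕂)
    (hx : 2 * ‖x‖ < n + 1) :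
    ‖(n ! : 𝕂) * ∑' k : ℕ, x ^ (k + 1) / ((n + (k + 1))! : 𝕂)‖ < 1 := by
  have hn : (0 : ℝ) < n + 1 := by positivity
  refine (norm_factorial_mul_tsum_pow_succ_div_factorial_add_le n x (by linarith)).trans_lt ?_
  have hr : ‖x‖ / (n + 1) < 1 / 2 := by rw [div_lt_iff₀ hn]; linarith
  rw [mul_inv_lt_iff₀ (by linarith)]
  linarith

lemma factorial_mul_tsum_pow_add_div_factorial_add (n : ℕ) (x : 𝕂) :
    (n ! : 𝕂) * ∑' k : ℕ, x ^ (k + n) / ((k + n)! : 𝕂)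
      = x ^ n * (1 + (n ! : 𝕂) * ∑' k : ℕ, x ^ (k + 1) / ((n + (k + 1))! : 𝕂)) := by
  have hn : (n ! : 𝕂) ≠ 0 := by exact_mod_cast n.factorial_ne_zero
  have hshift : ∑' k : ℕ, x ^ (k + n) / ((k + n)! : 𝕂)
      = x ^ n * ∑' k : ℕ, x ^ k / ((n + k)! : 𝕂) := by
    rw [← tsum_mul_left]
    congr 1 with k
    rw [add_comm k n, pow_add, mul_div_assoc]
  rw [hshift, (summable_pow_div_factorial_add n x).tsum_eq_zero_add, pow_zero, add_zero]
  field_simp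

/-- For `|x| < (m+2)/2`, the quantity `S = (m+1)! ∑_{k≥1} x^k/(m+1+k)!` has `|S| < 1`,
and consequently `x^{m+1}/((m+1)! R_m(x))` equals the convergent geometric series
`∑_j (-S)^j`, where `R_m(x) = ∑_{k≥m+1} x^k/k!`. -/
theorem stmt_6 (m : ℕ) (x : ℂ) (hx : ‖x‖ < ((m : ℝ) + 2) / 2) :
    ‖(((m + 1).factorial : ℂ)) * ∑' k : ℕ, x ^ (k + 1) / (((m + 2 + k).factorial : ℂ))‖ < 1 ∧
    (x ≠ 0 →
      x ^ (m + 1) /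
          (((m + 1).factorial : ℂ) * ∑' k : ℕ, x ^ (k + (m + 1)) / (((k + (m + 1)).factorial : ℂ)))
        = ∑' j : ℕ,
            (-(((m + 1).factorial : ℂ) * ∑' k : ℕ, x ^ (k + 1) / (((m + 2 + k).factorial : ℂ)))) ^ j) := by
  have hindex : ∀ k, m + 2 + k = m + 1 + (k + 1) := fun k ↦ by omega
  simp only [hindex]
  have hS := norm_factorial_mul_tsum_pow_succ_div_factorial_add_lt_one (m + 1) x
    (by push_cast; linarith)
  refine ⟨hS, fun hx0 ↦ ?_⟩
  rw [factorial_mul_tsum_pow_add_div_factorial_add, div_mul_cancel_left₀ (pow_ne_zero _ hx0),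
    tsum_geometric_of_norm_lt_one (by rwa [norm_neg]), sub_neg_eq_add]
end

section
/- Let W be a prefix-closed set of words with letters in [n] and let W_k be the words of length k in W. If \pi is chosen uniformly at random from S_{m,n}, then Pr[L_{m,n}(\pi; W) \ge k] \le |W_k| m^k / k!. -/
/-!
Fix a word `w` of length `k`. An occurrence of `w` in `π`, given by increasing positions
`f 0 < ⋯ < f (k - 1)`, together with a permutation `σ` of `Fin k`, is encoded by the word `ρ`
obtained from `π` by permuting the letters at these positions by `σ`, and by the copy indices
`c i < m` saying which occurrence of its letter in `ρ` the `i`-th letter of `w` has become.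
The encoding is injective: `ρ` and `c` give back the new positions `f ∘ σ⁻¹`, whose range
determines the monotone `f`, hence `σ`, hence `π`. As `ρ ∈ S_{m,n}`, the number of occurrences
times `k!` is at most `m ^ k · |S_{m,n}|`; a union bound over `W_k` finishes.
-/

def baseWord (m n : ℕ) : List ℕ := (List.range n).flatMap fun i => List.replicate m (i + 1)

def multisetPerms (m n : ℕ) : Finset (List ℕ) := (baseWord m n).permutations.toFinset

open Finset

section OccurrenceRank

variable {α : Type*} [DecidableEq α] {L : ℕ}

def occurrenceRank (ρ : Fin L → α) (p : Fin L) : ℕ := #{j | j < p ∧ ρ j = ρ p}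

lemma occurrenceRank_lt_of_lt {ρ : Fin L → α} {p q : Fin L} (hpq : p < q) (h : ρ p = ρ q) :
    occurrenceRank ρ p < occurrenceRank ρ q := by
  refine card_lt_card ((ssubset_iff_of_subset fun j hj => ?_).2 ⟨p, ?_, ?_⟩)
  · simp only [mem_filter, mem_univ, true_and] at hj ⊢
    exact ⟨hj.1.trans hpq, hj.2.trans h⟩
  · simpa using ⟨hpq, h⟩
  · simp

lemma eq_of_occurrenceRank_eq {ρ : Fin L → α} {p q : Fin L} (h : ρ p = ρ q)
    (hrank : occurrenceRank ρ p = occurrenceRank ρ q) : p = q := by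
  rcases lt_trichotomy p q with hpq | rfl | hqp
  · exact absurd hrank (occurrenceRank_lt_of_lt hpq h).ne
  · rfl
  · exact absurd hrank (occurrenceRank_lt_of_lt hqp h.symm).ne'

lemma occurrenceRank_lt_card (ρ : Fin L → α) (p : Fin L) :
    occurrenceRank ρ p < #{j | ρ j = ρ p} := by
  refine card_lt_card ((ssubset_iff_of_subset fun j hj => ?_).2 ⟨p, by simp, by simp⟩)
  simp only [mem_filter, mem_univ, true_and] at hj ⊢
  exact hj.2

end OccurrenceRank

section Rearrange

variable {α : Type*} {k L : ℕ}

def rearrange (g : Fin L → α) (f : Fin k ↪o Fin L) (σ : Equiv.Perm (Fin k)) : Fin L → α :=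
  g ∘ σ.viaFintypeEmbedding f.toEmbedding

lemma rearrange_apply_image (g : Fin L → α) (f : Fin k ↪o Fin L) (σ : Equiv.Perm (Fin k))
    (i : Fin k) : rearrange g f σ (f i) = g (f (σ i)) :=
  congrArg g (σ.viaFintypeEmbedding_apply_image f.toEmbedding i)

lemma rearrange_injective (f : Fin k ↪o Fin L) (σ : Equiv.Perm (Fin k)) :
    Function.Injective fun g : Fin L → α => rearrange g f σ :=
  (σ.viaFintypeEmbedding f.toEmbedding).surjective.injective_comp_right

end Rearrange

section Subsequence

variable {α : Type*} {L : ℕ}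

lemma exists_orderEmbedding_of_sublist_ofFn {w : List α} {g : Fin L → α}
    (h : w.Sublist (List.ofFn g)) : ∃ f : Fin w.length ↪o Fin L, ∀ i, g (f i) = w.get i := by
  obtain ⟨F, hF⟩ := List.sublist_iff_exists_fin_orderEmbedding_get_eq.1 h
  exact ⟨F.trans (Fin.castOrderIso List.length_ofFn).toOrderEmbedding,
    fun i => ((hF i).trans (List.get_ofFn g _)).symm⟩

end Subsequence

variable {α : Type*} [DecidableEq α] {k L : ℕ}

theorem card_occurrences_mul_factorial_le (T : Finset (Fin L → α)) (m : ℕ)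
    (hT : ∀ g ∈ T, ∀ e : Equiv.Perm (Fin L), g ∘ e ∈ T)
    (hcount : ∀ g ∈ T, ∀ a, #{j | g j = a} ≤ m) (w : Fin k → α) :
    #{x ∈ T ×ˢ (univ : Finset (Fin k ↪o Fin L)) | ∀ i, x.1 (x.2 i) = w i} * k.factorial
      ≤ m ^ k * #T := by
  set D := {x ∈ T ×ˢ (univ : Finset (Fin k ↪o Fin L)) | ∀ i, x.1 (x.2 i) = w i}
  let encode (x : ((Fin L → α) × (Fin k ↪o Fin L)) × Equiv.Perm (Fin k)) :
      (Fin L → α) × (Fin k → ℕ) :=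
    let ρ := rearrange x.1.1 x.1.2 x.2
    (ρ, fun i => occurrenceRank ρ (x.1.2 (x.2⁻¹ i)))
  have hletter : ∀ g f, (g, f) ∈ D → ∀ σ : Equiv.Perm (Fin k), ∀ i,
      rearrange g f σ (f (σ⁻¹ i)) = w i := by
    intro g f hx σ i
    rw [rearrange_apply_image, ← Equiv.Perm.mul_apply, mul_inv_cancel, Equiv.Perm.one_apply]
    exact (mem_filter.1 hx).2 i
  have hmaps : Set.MapsTo encode ↑(D ×ˢ (univ : Finset (Equiv.Perm (Fin k))))
      ↑(T ×ˢ Fintype.piFinset fun _ : Fin k => range m) := by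
    rintro ⟨⟨g, f⟩, σ⟩ hx
    have hg : g ∈ T := (mem_product.1 (mem_filter.1 (mem_product.1 hx).1).1).1
    refine mem_product.2 ⟨hT g hg _, Fintype.mem_piFinset.2 fun i => mem_range.2 ?_⟩
    exact (occurrenceRank_lt_card _ _).trans_le (hcount _ (hT g hg _) _)
  have hinj : Set.InjOn encode ↑(D ×ˢ (univ : Finset (Equiv.Perm (Fin k)))) := by
    rintro ⟨⟨g₁, f₁⟩, σ₁⟩ hx₁ ⟨⟨g₂, f₂⟩, σ₂⟩ hx₂ heq
    simp only [coe_product, Set.mem_prod, mem_coe, mem_univ, and_true] at hx₁ hx₂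
    simp only [encode, Prod.mk.injEq] at heq
    obtain ⟨hρ, hrank⟩ := heq
    have hpos : ∀ i, f₁ (σ₁⁻¹ i) = f₂ (σ₂⁻¹ i) := fun i =>
      eq_of_occurrenceRank_eq (by rw [hletter _ _ hx₁, hρ, hletter _ _ hx₂])
        ((congrFun hrank i).trans (by rw [hρ]))
    have hf : f₁ = f₂ := by
      refine OrderEmbedding.range_inj.1 ?_
      calc Set.range f₁ = Set.range (f₁ ∘ ⇑σ₁⁻¹) := (σ₁⁻¹.surjective.range_comp _).symm
        _ = Set.range (f₂ ∘ ⇑σ₂⁻¹) := congrArg Set.range (funext hpos)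
        _ = Set.range f₂ := σ₂⁻¹.surjective.range_comp _
    subst hf
    have hσ : σ₁ = σ₂ :=
      inv_injective (Equiv.ext fun i => f₁.injective (hpos i))
    subst hσ
    rw [rearrange_injective f₁ σ₁ hρ]
  have hcard := card_le_card_of_injOn encode hmaps hinj
  rwa [card_product, card_product, card_univ, Fintype.card_perm, Fintype.card_fin,
    Fintype.card_piFinset_const, card_range, mul_comm (#T)] at hcard

lemma card_filter_eq_count_ofFn (g : Fin L → α) (a : α) :
    #{j | g j = a} = (List.ofFn g).count a := by
  rw [← Multiset.coe_count, ← Fin.univ_val_map, Multiset.count_map]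
  simp only [eq_comm (a := a)]
  rfl

theorem card_filter_sublist_mul_factorial_le {b : List α} {m : ℕ} (hb : ∀ a, b.count a ≤ m)
    (w : List α) :
    #{π ∈ b.permutations.toFinset | w.Sublist π} * w.length.factorial
      ≤ m ^ w.length * #b.permutations.toFinset := by
  set S := b.permutations.toFinset
  set T := S.preimage (List.ofFn (n := b.length)) List.ofFn_injective.injOn
  have hTS : T.image List.ofFn = S := by
    classical
    rw [image_preimage, filter_true_of_mem]
    intro π hπ
    have hlen : π.length = b.length :=
      (List.mem_permutations.1 (List.mem_toFinset.1 hπ)).length_eq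
    exact ⟨fun j => π.get (j.cast hlen.symm), List.ext_getElem (by simp [hlen]) (by simp)⟩
  have hTS_card : #T = #S := by rw [← hTS, card_image_of_injective _ List.ofFn_injective]
  have hT : ∀ g ∈ T, ∀ e : Equiv.Perm (Fin b.length), g ∘ e ∈ T := by
    intro g hg e
    simp only [T, S, mem_preimage, List.mem_toFinset, List.mem_permutations] at hg ⊢
    exact (e.ofFn_comp_perm g).trans hg
  have hcount : ∀ g ∈ T, ∀ a, #{j | g j = a} ≤ m := by
    intro g hg a
    simp only [T, S, mem_preimage, List.mem_toFinset, List.mem_permutations] at hg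
    rw [card_filter_eq_count_ofFn, hg.count_eq]
    exact hb a
  have hfilter : #{π ∈ S | w.Sublist π} = #{g ∈ T | w.Sublist (List.ofFn g)} := by
    rw [← hTS, filter_image, card_image_of_injective _ List.ofFn_injective]
  set D := {x ∈ T ×ˢ (univ : Finset (Fin w.length ↪o Fin b.length)) |
    ∀ i, x.1 (x.2 i) = w.get i}
  have hembed : {g ∈ T | w.Sublist (List.ofFn g)} ⊆ D.image Prod.fst := by
    intro g hg
    obtain ⟨hgT, hsub⟩ := mem_filter.1 hg
    obtain ⟨f, hf⟩ := exists_orderEmbedding_of_sublist_ofFn hsub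
    exact mem_image.2 ⟨(g, f), mem_filter.2 ⟨mem_product.2 ⟨hgT, mem_univ f⟩, hf⟩, rfl⟩
  calc #{π ∈ S | w.Sublist π} * w.length.factorial
      ≤ #D * w.length.factorial := by
        rw [hfilter]
        gcongr
        exact (card_le_card hembed).trans card_image_le
    _ ≤ m ^ w.length * #S := hTS_card ▸ card_occurrences_mul_factorial_le T m hT hcount w.get

lemma count_baseWord (m n a : ℕ) :
    (baseWord m n).count a = if 1 ≤ a ∧ a ≤ n then m else 0 := by
  induction n with
  | zero => simp [baseWord]; omega
  | succ n ih =>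
    have h : baseWord m (n + 1) = baseWord m n ++ List.replicate m (n + 1) := by
      simp [baseWord, List.range_succ]
    rw [h, List.count_append, ih, List.count_replicate]
    by_cases h1 : n + 1 = a <;> split_ifs <;> simp_all <;> omega

lemma count_baseWord_le (m n a : ℕ) : (baseWord m n).count a ≤ m := by
  rw [count_baseWord]
  split_ifs <;> omega

theorem stmt_12_general (m n k : ℕ) (W : Finset (List ℕ)) :
    ((multisetPerms m n).filter fun π => ∃ w ∈ W, w.length = k ∧ w.Sublist π).card
        * k.factorial
      ≤ (W.filter fun w => w.length = k).card * m ^ k * (multisetPerms m n).card := by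
  set Wk := W.filter fun w => w.length = k
  have hunion : ((multisetPerms m n).filter fun π => ∃ w ∈ W, w.length = k ∧ w.Sublist π) ⊆
      Wk.biUnion fun w => {π ∈ multisetPerms m n | w.Sublist π} := by
    intro π hπ
    obtain ⟨hπS, w, hwW, hwk, hsub⟩ := mem_filter.1 hπ
    exact mem_biUnion.2 ⟨w, mem_filter.2 ⟨hwW, hwk⟩, mem_filter.2 ⟨hπS, hsub⟩⟩
  have hword : ∀ w ∈ Wk, #{π ∈ multisetPerms m n | w.Sublist π} * k.factorial
      ≤ m ^ k * #(multisetPerms m n) := by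
    intro w hw
    rw [← (mem_filter.1 hw).2]
    exact card_filter_sublist_mul_factorial_le (count_baseWord_le m n) w
  calc _ ≤ (∑ w ∈ Wk, #{π ∈ multisetPerms m n | w.Sublist π}) * k.factorial := by
        gcongr
        exact (card_le_card hunion).trans card_biUnion_le
    _ ≤ ∑ w ∈ Wk, m ^ k * #(multisetPerms m n) := by
        rw [sum_mul]
        exact sum_le_sum hword
    _ = #Wk * m ^ k * #(multisetPerms m n) := by
        rw [sum_const, smul_eq_mul, mul_assoc]

/-- If `W` is a prefix-closed set of words with distinct letters in `[n]`, `W_k` is the set of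
words of length `k` in `W`, and `π` is uniform on `S_{m,n}`, then
`Pr[L_{m,n}(π; W) ≥ k] ≤ |W_k| m^k / k!`. -/
theorem stmt_12 (m n k : ℕ) (hm : 1 ≤ m) (W : Finset (List ℕ))
    (hletters : ∀ w ∈ W, ∀ a ∈ w, a ∈ Finset.Icc 1 n)
    (hnodup : ∀ w ∈ W, w.Nodup)
    (hprefix : ∀ w ∈ W, ∀ p : List ℕ, p <+: w → p ∈ W) :
    ((multisetPerms m n).filter fun π => ∃ w ∈ W, w.length = k ∧ w.Sublist π).card
        * k.factorial
      ≤ (W.filter fun w => w.length = k).card * m ^ k * (multisetPerms m n).card :=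
  stmt_12_general m n k W
end

section
/- Let T \subseteq [m]^n be such that any two distinct x, y \in T have Hamming distance at least \delta. Then the probability that a uniformly random multiset permutation \pi \in S_{m,n} contains the word 1 2 \cdots n as a subsequence is at least (|T|/n!)(1 - |T|/\delta!). -/
open Finset

theorem List.exists_perm_comp_eq_of_perm_ofFn {α : Type*} [LinearOrder α] {n : ℕ}
    {f g : Fin n → α} (h : (List.ofFn f).Perm (List.ofFn g)) :
    ∃ σ : Equiv.Perm (Fin n), f ∘ σ = g := by
  have hsorted : f ∘ Tuple.sort f = g ∘ Tuple.sort g := by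
    refine List.ofFn_injective (List.Perm.eq_of_sortedLE (Tuple.monotone_sort f).sortedLE_ofFn
      (Tuple.monotone_sort g).sortedLE_ofFn ?_)
    exact ((Tuple.sort f).ofFn_comp_perm f).trans <| h.trans ((Tuple.sort g).ofFn_comp_perm g).symm
  refine ⟨Tuple.sort f * (Tuple.sort g)⁻¹, ?_⟩
  rw [Equiv.Perm.coe_mul, ← Function.comp_assoc, hsorted, Function.comp_assoc,
    ← Equiv.Perm.coe_mul, mul_inv_cancel, Equiv.Perm.coe_one, Function.comp_id]

theorem List.ofFn_comp_sublist {α : Type*} {k N : ℕ} (w : Fin N → α) {f : Fin k → Fin N}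
    (hf : StrictMono f) : (List.ofFn (w ∘ f)).Sublist (List.ofFn w) := by
  rw [List.sublist_iff_exists_fin_orderEmbedding_get_eq]
  refine ⟨(Fin.castOrderIso List.length_ofFn).toOrderEmbedding.trans
    ((OrderEmbedding.ofStrictMono f hf).trans
      (Fin.castOrderIso List.length_ofFn.symm).toOrderEmbedding), fun i => ?_⟩
  simp [Fin.cast]

theorem Tuple.sort_comp_perm {α : Type*} [LinearOrder α] {n : ℕ} {f : Fin n → α}
    (hf : StrictMono f) (σ : Equiv.Perm (Fin n)) : Tuple.sort (f ∘ σ) = σ⁻¹ := by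
  refine (Tuple.eq_sort_iff.2 ⟨?_, fun i j hij hfij => ?_⟩).symm
  · simpa [Function.comp_def] using hf.monotone
  · exact absurd (hf.injective (by simpa using hfij)) hij.ne

theorem Finset.sum_card_le_card_biUnion_add {α β : Type*} [DecidableEq α] [DecidableEq β]
    (s : Finset α) (f : α → Finset β) :
    ∑ a ∈ s, #(f a) ≤ #(s.biUnion f) + ∑ p ∈ s.offDiag, #(f p.1 ∩ f p.2) := by
  induction s using Finset.induction_on with
  | empty => simp
  | insert a s ha ih =>
    have hnew : #(f a ∩ s.biUnion f) ≤ ∑ b ∈ s, #(f a ∩ f b) := by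
      rw [inter_biUnion]
      exact card_biUnion_le
    have hpairs : ∑ p ∈ s.offDiag, #(f p.1 ∩ f p.2) + ∑ b ∈ s, #(f a ∩ f b)
        ≤ ∑ p ∈ (insert a s).offDiag, #(f p.1 ∩ f p.2) := by
      have hdisj : Disjoint s.offDiag ({a} ×ˢ s) := disjoint_left.2 fun p hp hq =>
        ha ((mem_singleton.1 (mem_product.1 hq).1) ▸ (mem_offDiag.1 hp).1)
      calc _ = ∑ p ∈ s.offDiag ∪ {a} ×ˢ s, #(f p.1 ∩ f p.2) := by
            rw [sum_union hdisj, sum_product, sum_singleton]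
        _ ≤ _ := by
            rw [offDiag_insert ha]
            exact sum_le_sum_of_subset subset_union_left
    have hunion := card_union_add_card_inter (f a) (s.biUnion f)
    rw [sum_insert ha, biUnion_insert]
    omega

theorem Finset.card_mul_sub_le_card_biUnion {α β : Type*} [DecidableEq α] [DecidableEq β]
    (s : Finset α) (f : α → Finset β) {a b : ℝ} (ha : ∀ x ∈ s, a ≤ #(f x))
    (hb : ∀ x ∈ s, ∀ y ∈ s, x ≠ y → (#(f x ∩ f y) : ℝ) ≤ b) :
    #s * a - #s * (#s - 1) * b ≤ #(s.biUnion f) := by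
  have hsum : ∑ x ∈ s, (#(f x) : ℝ) ≤ #(s.biUnion f) + ∑ p ∈ s.offDiag, (#(f p.1 ∩ f p.2) : ℝ) := by
    exact_mod_cast sum_card_le_card_biUnion_add s f
  have hlow : #s * a ≤ ∑ x ∈ s, (#(f x) : ℝ) := by
    simpa using sum_le_sum ha
  have hpairs : ∑ p ∈ s.offDiag, (#(f p.1 ∩ f p.2) : ℝ) ≤ #s * (#s - 1) * b := by
    have hcard : (#s.offDiag : ℝ) = #s * (#s - 1) := by
      rw [offDiag_card, Nat.cast_sub (Nat.le_mul_self _)]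
      push_cast
      ring
    rw [← hcard, ← nsmul_eq_mul, ← sum_const]
    exact sum_le_sum fun p hp => hb p.1 (mem_offDiag.1 hp).1 p.2 (mem_offDiag.1 hp).2.1
      (mem_offDiag.1 hp).2.2
  linarith

section permWord

variable {γ : Type*} {N : ℕ} (b : Fin N → γ)

def permWord (g : Equiv.Perm (Fin N)) : List γ := List.ofFn (b ∘ ⇑g⁻¹)

theorem permWord_perm (g : Equiv.Perm (Fin N)) : (permWord b g).Perm (List.ofFn b) :=
  g⁻¹.ofFn_comp_perm b

theorem exists_permWord_eq [LinearOrder γ] {π : List γ} (h : π.Perm (List.ofFn b)) :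
    ∃ g, permWord b g = π := by
  obtain rfl : π.length = N := by simpa using h.length_eq
  obtain ⟨σ, hσ⟩ := List.exists_perm_comp_eq_of_perm_ofFn (f := b) (g := fun i => π[(i : ℕ)])
    (by simpa using h.symm)
  exact ⟨σ⁻¹, by simp [permWord, hσ]⟩

theorem permWord_eq_permWord_iff (g g₀ : Equiv.Perm (Fin N)) :
    permWord b g = permWord b g₀ ↔ permWord b (g₀⁻¹ * g) = permWord b 1 := by
  simp only [permWord, List.ofFn_inj]
  constructor <;> intro h <;> funext p
  · simpa using congrFun h (g₀ p)
  · simpa using congrFun h (g₀⁻¹ p)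

theorem card_filter_permWord_eq [DecidableEq γ] (g₀ : Equiv.Perm (Fin N)) :
    #{g | permWord b g = permWord b g₀} = #{g | permWord b g = permWord b 1} := by
  refine Finset.card_nbij' (g₀⁻¹ * ·) (g₀ * ·) ?_ ?_ ?_ ?_ <;> intro g hg <;>
    simp_all [permWord_eq_permWord_iff b _ g₀]

theorem card_filter_permWord [LinearOrder γ] (P : List γ → Prop) [DecidablePred P] :
    #{g | P (permWord b g)} =
      #((List.ofFn b).permutations.toFinset.filter P) * #{g | permWord b g = permWord b 1} := by
  rw [card_eq_sum_card_fiberwise (f := permWord b)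
    (t := (List.ofFn b).permutations.toFinset.filter P) (fun g hg => ?_), ← smul_eq_mul,
    ← sum_const]
  · refine sum_congr rfl fun π hπ => ?_
    obtain ⟨hπ, hPπ⟩ := mem_filter.1 hπ
    obtain ⟨g₀, rfl⟩ := exists_permWord_eq b (List.mem_permutations.1 (List.mem_toFinset.1 hπ))
    rw [← card_filter_permWord_eq b g₀, filter_filter]
    exact congrArg card (filter_congr fun g _ => ⟨And.right, fun h => ⟨h ▸ hPπ, h⟩⟩)
  · exact mem_filter.2 ⟨List.mem_toFinset.2 (List.mem_permutations.2 (permWord_perm b g)),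
      (mem_filter.1 hg).2⟩

theorem card_filter_permutations_div [LinearOrder γ] (P : List γ → Prop) [DecidablePred P] :
    (#((List.ofFn b).permutations.toFinset.filter P) : ℝ) / #(List.ofFn b).permutations.toFinset
      = #{g | P (permWord b g)} / N.factorial := by
  have hall := card_filter_permWord b fun _ => True
  simp only [filter_true, card_univ, Fintype.card_perm, Fintype.card_fin] at hall
  have hfib : (0 : ℝ) < #{g | permWord b g = permWord b 1} := by
    exact_mod_cast card_pos.2 ⟨1, by simp⟩
  rw [card_filter_permWord b P, hall]
  push_cast
  rw [mul_div_mul_right _ _ hfib.ne']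

end permWord

section sortingCount

variable {β : Type*} [Fintype β] [LinearOrder β]

theorem card_filter_strictMono_comp_pair_mul {k l : ℕ}
    (s : Fin k → β) (t : Fin l → β) (hs : Function.Injective s) (ht : Function.Injective t)
    (hst : ∀ i j, s i ≠ t j) :
    #{g : Equiv.Perm β | StrictMono (g ∘ s) ∧ StrictMono (g ∘ t)} * (k.factorial * l.factorial)
      = (Fintype.card β).factorial := by
  let c : Fin k ⊕ Fin l ↪ β := ⟨Sum.elim s t, hs.sumElim ht hst⟩
  let e : Equiv.Perm (Fin k) × Equiv.Perm (Fin l) →* Equiv.Perm β :=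
    (Equiv.Perm.viaEmbeddingHom c).comp (Equiv.Perm.sumCongrHom _ _)
  have he_s : ∀ g p, ⇑(g * e p) ∘ s = (g ∘ s) ∘ p.1 := fun g p => funext fun i =>
    congrArg g (Equiv.Perm.viaEmbedding_apply _ c (Sum.inl i))
  have he_t : ∀ g p, ⇑(g * e p) ∘ t = (g ∘ t) ∘ p.2 := fun g p => funext fun j =>
    congrArg g (Equiv.Perm.viaEmbedding_apply _ c (Sum.inr j))
  -- `(g, p) ↦ g * e p` maps `{g | g ∘ s, g ∘ t increasing} × (Perm (Fin k) × Perm (Fin l))`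
  -- bijectively onto `Perm β`: the coset `h * range e` meets that set only at
  -- `h * (e (sorter h))⁻¹`.
  let sorter : Equiv.Perm β → Equiv.Perm (Fin k) × Equiv.Perm (Fin l) :=
    fun h => ((Tuple.sort (h ∘ s))⁻¹, (Tuple.sort (h ∘ t))⁻¹)
  have hprod : #(({g | StrictMono (g ∘ s) ∧ StrictMono (g ∘ t)} : Finset (Equiv.Perm β)) ×ˢ
      (univ : Finset (Equiv.Perm (Fin k) × Equiv.Perm (Fin l))))
      = #(univ : Finset (Equiv.Perm β)) := by
    refine card_nbij' (fun q => q.1 * e q.2) (fun h => (h * (e (sorter h))⁻¹, sorter h))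
      (fun _ _ => mem_coe.2 (mem_univ _)) (fun h _ => ?_) (fun ⟨g, p⟩ hq => ?_) (fun h _ => ?_)
    · simp only [mem_coe, mem_product, mem_filter, mem_univ, true_and, and_true, ← map_inv,
        he_s, he_t]
      exact ⟨(Tuple.monotone_sort _).strictMono_of_injective
          ((h.injective.comp hs).comp (Equiv.injective _)),
        (Tuple.monotone_sort _).strictMono_of_injective
          ((h.injective.comp ht).comp (Equiv.injective _))⟩
    · simp only [mem_coe, mem_product, mem_filter, mem_univ, true_and, and_true] at hq
      have hp : sorter (g * e p) = p := by
        simp only [sorter, he_s, he_t, Tuple.sort_comp_perm hq.1, Tuple.sort_comp_perm hq.2,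
          inv_inv]
      simp [hp]
    · simp
  simpa [card_product, Fintype.card_perm] using hprod

theorem card_filter_strictMono_comp_mul {k : ℕ} (s : Fin k → β) (hs : Function.Injective s) :
    #{g : Equiv.Perm β | StrictMono (g ∘ s)} * k.factorial = (Fintype.card β).factorial := by
  simpa [Subsingleton.strictMono] using
    card_filter_strictMono_comp_pair_mul s Fin.elim0 hs (fun i => i.elim0) fun _ j => j.elim0

end sortingCount

def letter (n m : ℕ) (p : Fin (n * m)) : ℕ := (finProdFinEquiv.symm p).1 + 1

theorem baseWord_eq_ofFn_letter (m n : ℕ) : baseWord m n = List.ofFn (letter n m) := by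
  have hblock : ∀ (i : Fin n) (j : Fin m) (h), letter n m ⟨i * m + j, h⟩ = i + 1 := by
    intro i j h
    rw [show (⟨i * m + j, h⟩ : Fin (n * m)) = finProdFinEquiv (i, j) from
      Fin.ext (by simp [Nat.mul_comm, Nat.add_comm])]
    simp [letter]
  simp [List.ofFn_mul, hblock, baseWord, List.flatMap_def, List.ofFn_eq_map,
    ← List.map_coe_finRange_eq_range]
  rfl

section symbolPos

variable {n m : ℕ}

def symbolPos (x : Fin n → Fin m) (i : Fin n) : Fin (n * m) := finProdFinEquiv (i, x i)

theorem symbolPos_eq_symbolPos_iff {x y : Fin n → Fin m} {i j : Fin n} :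
    symbolPos x i = symbolPos y j ↔ i = j ∧ x i = y j := by
  simp [symbolPos]

theorem symbolPos_injective (x : Fin n → Fin m) : Function.Injective (symbolPos x) :=
  fun _ _ h => (symbolPos_eq_symbolPos_iff.1 h).1

theorem letter_comp_symbolPos (x : Fin n → Fin m) :
    letter n m ∘ symbolPos x = fun i : Fin n => (i : ℕ) + 1 := by
  funext i
  simp [letter, symbolPos]

def inOrderEvent (x : Fin n → Fin m) : Finset (Equiv.Perm (Fin (n * m))) :=
  {g | StrictMono (g ∘ symbolPos x)}

theorem sublist_permWord_of_mem_inOrderEvent {x : Fin n → Fin m} {g : Equiv.Perm (Fin (n * m))}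
    (hg : g ∈ inOrderEvent x) : (List.range' 1 n).Sublist (permWord (letter n m) g) := by
  have hword : List.range' 1 n = List.ofFn ((letter n m ∘ ⇑g⁻¹) ∘ (g ∘ symbolPos x)) := by
    rw [show (letter n m ∘ ⇑g⁻¹) ∘ (g ∘ symbolPos x) = letter n m ∘ symbolPos x by
      funext; simp, letter_comp_symbolPos]
    apply List.ext_getElem <;> simp [Nat.add_comm]
  rw [hword]
  exact List.ofFn_comp_sublist _ (mem_filter.1 hg).2

theorem card_inOrderEvent_mul (x : Fin n → Fin m) :
    #(inOrderEvent x) * n.factorial = (n * m).factorial := by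
  simpa [inOrderEvent] using card_filter_strictMono_comp_mul (symbolPos x) (symbolPos_injective x)

theorem card_inOrderEvent_inter_mul_le {δ : ℕ} {x y : Fin n → Fin m}
    (hxy : δ ≤ hammingDist x y) :
    #(inOrderEvent x ∩ inOrderEvent y) * (n.factorial * δ.factorial) ≤ (n * m).factorial := by
  obtain ⟨S, hS, hScard⟩ := exists_subset_card_eq hxy
  let d := S.orderEmbOfFin hScard
  have hd : ∀ j, x (d j) ≠ y (d j) := fun j => (mem_filter.1 (hS (S.orderEmbOfFin_mem hScard j))).2
  have hpair := card_filter_strictMono_comp_pair_mul (symbolPos x) (symbolPos y ∘ d)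
    (symbolPos_injective x) ((symbolPos_injective y).comp d.injective) fun i j h => by
      obtain ⟨rfl, hxy⟩ := symbolPos_eq_symbolPos_iff.1 h
      exact hd j hxy
  rw [Fintype.card_fin] at hpair
  rw [← hpair]
  refine Nat.mul_le_mul_right _ (card_le_card fun g hg => ?_)
  simp only [inOrderEvent, mem_inter, mem_filter, mem_univ, true_and] at hg ⊢
  exact ⟨hg.1, hg.2.comp d.strictMono⟩

end symbolPos

theorem stmt_13_general (m n δ : ℕ) (T : Finset (Fin n → Fin m))
    (hT : ∀ x ∈ T, ∀ y ∈ T, x ≠ y → δ ≤ hammingDist x y) :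
    ((T.card : ℝ) / (n.factorial : ℝ)) * (1 - (T.card : ℝ) / (δ.factorial : ℝ))
      ≤ ((multisetPerms m n).filter fun π => (List.range' 1 n).Sublist π).card
          / (multisetPerms m n).card := by
  have hN : (0 : ℝ) < (n * m).factorial := by positivity
  have hunion : #(T.biUnion inOrderEvent)
      ≤ #{g | (List.range' 1 n).Sublist (permWord (letter n m) g)} :=
    card_le_card fun g hg => by
      obtain ⟨x, -, hx⟩ := mem_biUnion.1 hg
      exact mem_filter.2 ⟨mem_univ _, sublist_permWord_of_mem_inOrderEvent hx⟩
  have hbonf := card_mul_sub_le_card_biUnion T inOrderEvent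
    (a := (n * m).factorial / n.factorial) (b := (n * m).factorial / (n.factorial * δ.factorial))
    (fun x _ => by
      rw [div_le_iff₀ (by positivity)]
      exact_mod_cast (card_inOrderEvent_mul x).ge)
    (fun x hx y hy hne => by
      rw [le_div_iff₀ (by positivity)]
      exact_mod_cast card_inOrderEvent_inter_mul_le (hT x hx y hy hne))
  rw [multisetPerms, baseWord_eq_ofFn_letter, card_filter_permutations_div, le_div_iff₀ hN]
  have hcorr : (0 : ℝ) ≤ #T * ((n * m).factorial / (n.factorial * δ.factorial)) := by positivity
  calc (#T : ℝ) / n.factorial * (1 - #T / δ.factorial) * (n * m).factorial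
      = #T * ((n * m).factorial / n.factorial)
          - #T * (#T - 1) * ((n * m).factorial / (n.factorial * δ.factorial))
          - #T * ((n * m).factorial / (n.factorial * δ.factorial)) := by
        field_simp
        ring
    _ ≤ #(T.biUnion inOrderEvent) := by linarith
    _ ≤ _ := by exact_mod_cast hunion

/-- If `T ⊆ [m]^n` has pairwise Hamming distance at least `δ`, then the probability that a
uniformly random `π ∈ S_{m,n}` contains `1 2 ⋯ n` as a subsequence is at least
`(|T|/n!)(1 - |T|/δ!)`. -/
theorem stmt_13 (m n δ : ℕ) (hm : 1 ≤ m) (T : Finset (Fin n → Fin m))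
    (hT : ∀ x ∈ T, ∀ y ∈ T, x ≠ y → δ ≤ hammingDist x y) :
    ((T.card : ℝ) / (n.factorial : ℝ)) * (1 - (T.card : ℝ) / (δ.factorial : ℝ))
      ≤ ((multisetPerms m n).filter fun π => (List.range' 1 n).Sublist π).card
          / (multisetPerms m n).card :=
  stmt_13_general m n δ T hT
end
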